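/- Let W[1..m] be a sequence of m ≥ 1 binary strings of length ℓ ≥ 1 and let T = SeqToString_ℓ(W), with s(i) as in the definition of SeqToString. Then for every X ∈ {0,1}^{≤ℓ} and every i ∈ [0..m], it holds PrefixRank(W,i,X) = RangeBeg(X', T) − α, where X' = rev(X) · 4 · s(i) and α = RangeBeg(rev(X)·4, T). -/

import Mathlib

/-- Strict lexicographic order on strings: `U ≺ V` iff `U` is a proper prefix of `V`,
or `U` and `V` first differ at a position where `U` has the smaller symbol. -/
def LexLt {α : Type*} [LT α] (U V : List α) : Prop := List.Lex (· < ·) U V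

/-- Non-strict lexicographic order on strings. -/
def LexLe {α : Type*} [LT α] (U V : List α) : Prop := LexLt U V ∨ U = V

/-- The suffix `T[j..|T|]` of `T` (1-based index `j`). -/
def Suf {α : Type*} (T : List α) (j : ℕ) : List α := T.drop (j - 1)

/-- `Occ P T` is the set of starting positions (1-based) of occurrences of `P` in `T`. -/
def Occ {α : Type*} (P T : List α) : Set ℕ :=
  { j | 1 ≤ j ∧ j + P.length ≤ T.length + 1 ∧ (Suf T j).take P.length = P }

/-- `RangeBeg P T` = number of suffixes of `T` lexicographically smaller than `P`. -/
noncomputable def RangeBeg {α : Type*} [LT α] (P T : List α) : ℕ :=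
  { j | 1 ≤ j ∧ j ≤ T.length ∧ LexLt (Suf T j) P }.ncard

/-- `RangeEnd P T = RangeBeg P T + |Occ P T|`. -/
noncomputable def RangeEnd {α : Type*} [LT α] (P T : List α) : ℕ :=
  RangeBeg P T + (Occ P T).ncard

/-- `LexRange P₁ P₂ T` = positions `j ∈ [1..|T|]` with `P₁ ⪯ T[j..|T|] ≺ P₂`. -/
def LexRange {α : Type*} [LT α] (P₁ P₂ T : List α) : Set ℕ :=
  { j | 1 ≤ j ∧ j ≤ T.length ∧ LexLe P₁ (Suf T j) ∧ LexLt (Suf T j) P₂ }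

/-- `sa` is the suffix array of `T` (1-based): a permutation of `[1..|T|]` listing the
starting positions of the suffixes of `T` in increasing lexicographic order. -/
def IsSuffixArray {α : Type*} [LT α] (T : List α) (sa : ℕ → ℕ) : Prop :=
  (∀ i, 1 ≤ i → i ≤ T.length → 1 ≤ sa i ∧ sa i ≤ T.length) ∧
  (∀ j, 1 ≤ j → j ≤ T.length → ∃ i, 1 ≤ i ∧ i ≤ T.length ∧ sa i = j) ∧
  (∀ i j, 1 ≤ i → i < j → j ≤ T.length → LexLt (Suf T (sa i)) (Suf T (sa j)))

/-- `binSym k x` : the length-`k` binary representation of `x` (MSB first, leading zeros). -/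
def binSym (k x : ℕ) : List ℕ := (List.range k).map fun i => x / 2 ^ (k - 1 - i) % 2

/-- `binStr k S` = `bin_k(S[1]) · bin_k(S[2]) · … · bin_k(S[|S|])`. -/
def binStr (k : ℕ) (S : List ℕ) : List ℕ := (S.map (binSym k)).flatten

/-- `ebinSym k x = 1^{k+1} · 0 · bin_k(x) · 0`. -/
def ebinSym (k x : ℕ) : List ℕ := List.replicate (k + 1) 1 ++ [0] ++ binSym k x ++ [0]

/-- `ebinStr k S` = concatenation of `ebin_k(S[i])` for `i = 1, …, |S|`. -/
def ebinStr (k : ℕ) (S : List ℕ) : List ℕ := (S.map (ebinSym k)).flatten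

/-- `sEnc k i` : length-`k` base-2 representation of `i` with `0 ↦ 2` and `1 ↦ 3`. -/
def sEnc (k i : ℕ) : List ℕ := (binSym k i).map (· + 2)

/-- `SeqToString m W = ⊙_{i=1}^{m} rev(W[i]) · 4 · s(i-1)` with `k = 1 + ⌊log₂ m⌋`. -/
def SeqToString (m : ℕ) (W : ℕ → List ℕ) : List ℕ :=
  ((List.range m).map
    fun i => (W (i + 1)).reverse ++ [4] ++ sEnc (1 + Nat.log 2 m) i).flatten

/-- `PermSeqToString m π W = ⊙_{i=1}^{m} rev(W[π[i]]) · 4 · s(π[i]-1)`. -/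
def PermSeqToString (m : ℕ) (perm : ℕ → ℕ) (W : ℕ → List ℕ) : List ℕ :=
  ((List.range m).map
    fun i => (W (perm (i + 1))).reverse ++ [4]
      ++ sEnc (1 + Nat.log 2 m) (perm (i + 1) - 1)).flatten

/-- `PrefixRank W j X = |{ i ∈ [1..j] : X is a prefix of W[i] }|`. -/
noncomputable def PrefixRank {α : Type*} (W : ℕ → List α) (j : ℕ) (X : List α) : ℕ :=
  { i | 1 ≤ i ∧ i ≤ j ∧ X <+: W i }.ncard

/-- `p` is the `r`-th smallest element of the set `A ⊆ ℕ`. -/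
def IsKthSmallest (A : Set ℕ) (r p : ℕ) : Prop :=
  p ∈ A ∧ (A ∩ Set.Iic p).ncard = r

/-- Ceiling division `⌈a / b⌉` of positive naturals. -/
def cdiv (a b : ℕ) : ℕ := (a + b - 1) / b

/-- Alphabet inversion: `inv_σ(S)[i] = σ - 1 - S[i]`. -/
def invStr (σ : ℕ) (S : List ℕ) : List ℕ := S.map fun a => σ - 1 - a

/-- `p` is a period of `S`: `1 ≤ p ≤ |S|` and `S[i] = S[i+p]` for all `i ∈ [1..|S|-p]`. -/
def IsPeriod {α : Type*} (S : List α) (p : ℕ) : Prop :=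
  1 ≤ p ∧ p ≤ S.length ∧ S.drop p <+: S

/-- `per S`: the smallest period of `S`. -/
noncomputable def per {α : Type*} (S : List α) : ℕ := sInf { p | IsPeriod S p }

/-- `P` is `τ`-periodic: `|P| ≥ 3τ - 1` and `per(P[1..3τ-1]) ≤ τ/3`. -/
noncomputable def TauPeriodic {α : Type*} (τ : ℕ) (P : List α) : Prop :=
  3 * τ ≤ P.length + 1 ∧ 3 * per (P.take (3 * τ - 1)) ≤ τ

/-- `R(τ,T) = { i ∈ [1..n-3τ+2] : per(T[i..i+3τ-2]) ≤ τ/3 }`. -/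
noncomputable def Rset {α : Type*} (τ : ℕ) (T : List α) : Set ℕ :=
  { i | 1 ≤ i ∧ i + 3 * τ ≤ T.length + 2 ∧ 3 * per ((Suf T i).take (3 * τ - 1)) ≤ τ }

/-- `S` is a `τ`-synchronizing set of `T` (consistency and density conditions). -/
noncomputable def IsSyncSet {α : Type*} (τ : ℕ) (T : List α) (S : Set ℕ) : Prop :=
  (∀ j ∈ S, 1 ≤ j ∧ j + 2 * τ ≤ T.length + 1) ∧
  (∀ i j, 1 ≤ i → i + 2 * τ ≤ T.length + 1 → 1 ≤ j → j + 2 * τ ≤ T.length + 1 →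
    (Suf T i).take (2 * τ) = (Suf T j).take (2 * τ) → (i ∈ S ↔ j ∈ S)) ∧
  (∀ i, 1 ≤ i → i + 3 * τ ≤ T.length + 2 → (S ∩ Set.Ico i (i + τ) = ∅ ↔ i ∈ Rset τ T))

/-- `succ_S(x) = min { x' ∈ S : x' ≥ x }`. -/
noncomputable def succS (S : Set ℕ) (x : ℕ) : ℕ := sInf (S ∩ Set.Ici x)

/-- `DistPrefixes(τ,T,S) = { T[j..succ_S(j)+2τ) : j ∈ [1..n-3τ+2] \ R(τ,T) }`. -/
noncomputable def DistPrefixes {α : Type*} (τ : ℕ) (T : List α) (S : Set ℕ) : Set (List α) :=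
  (fun j => (Suf T j).take (succS S j + 2 * τ - j)) ''
    { j | 1 ≤ j ∧ j + 3 * τ ≤ T.length + 2 ∧ j ∉ Rset τ T }

/-- `r` is the value of the prefix RMQ: the smallest index `i ∈ (b..e]` with `X` a prefix of
`W[i]` minimizing `A[i]` (ties broken towards the smaller index). -/
def IsPrefixRMQ (A : ℕ → ℤ) (W : ℕ → List ℕ) (b e : ℕ) (X : List ℕ) (r : ℕ) : Prop :=
  (b < r ∧ r ≤ e ∧ X <+: W r) ∧
  (∀ i, b < i → i ≤ e → X <+: W i → A r ≤ A i) ∧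
  (∀ i, b < i → i ≤ e → X <+: W i → A i = A r → r ≤ i)

/-!
Cut `SeqToString m W` into the blocks `rev(W[t+1]) · 4 · s(t)`, all of length `ℓ + 1 + k`.
The suffixes counted by the difference of the two `RangeBeg`s are exactly those of the form
`rev(X) · 4 · R` with `R ≺ s(i)`. The symbol `4` occurs only at offset `ℓ` of a block, so such a
suffix starts at offset `ℓ - |X|` of some block `t`; this forces `X` to be a prefix of `W[t+1]`
and `R = s(t) · R'`. Since `s` is order-preserving on `[0, 2^k)` and `m < 2^k`, `R ≺ s(i)` holds
iff `t < i`.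
-/

section Lex

variable {α : Type*}

theorem not_lexLt_nil [LT α] (u : List α) : ¬ LexLt u [] :=
  List.not_lex_nil

theorem lexLt_append_left_iff [Preorder α] (u : List α) {s t : List α} :
    LexLt (u ++ s) (u ++ t) ↔ LexLt s t := by
  induction u with
  | nil => rfl
  | cons a u ih => exact List.lex_cons_iff.trans ih

theorem not_lexLt_append_self [Preorder α] (u v : List α) : ¬ LexLt (u ++ v) u := by
  simpa using (lexLt_append_left_iff u (t := [])).not.mpr (not_lexLt_nil v)

theorem lexLt_append_iff_of_length_eq [LT α] {u v : List α} (w : List α)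
    (h : u.length = v.length) : LexLt (u ++ w) v ↔ LexLt u v := by
  induction u generalizing v with
  | nil =>
    obtain rfl := List.length_eq_zero_iff.mp h.symm
    exact iff_of_false (not_lexLt_nil _) (not_lexLt_nil _)
  | cons a u ih =>
    obtain ⟨b, v, rfl⟩ := List.exists_cons_of_length_eq_add_one h.symm
    simp only [List.cons_append, LexLt, List.cons_lex_cons_iff]
    exact or_congr_right (and_congr_right fun _ => ih (by simpa using h))

theorem lexLt_append_and_not_lexLt_iff [Preorder α] {s p q : List α} :
    LexLt s (p ++ q) ∧ ¬ LexLt s p ↔ ∃ r, s = p ++ r ∧ LexLt r q := by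
  constructor
  · rintro ⟨hlt, hnlt⟩
    induction p generalizing s with
    | nil => exact ⟨s, rfl, hlt⟩
    | cons a p ih =>
      cases s with
      | nil => exact absurd List.Lex.nil hnlt
      | cons b s =>
        rcases List.cons_lex_cons_iff.mp hlt with hba | ⟨rfl, htail⟩
        · exact absurd (List.Lex.rel hba) hnlt
        · obtain ⟨r, rfl, hr⟩ := ih htail fun h => hnlt (List.Lex.cons h)
          exact ⟨r, rfl, hr⟩
  · rintro ⟨r, rfl, hr⟩
    exact ⟨(lexLt_append_left_iff p).mpr hr, not_lexLt_append_self p r⟩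

end Lex

theorem rangeBeg_append_sub_rangeBeg {α : Type*} [Preorder α] (P Q T : List α) :
    RangeBeg (P ++ Q) T - RangeBeg P T =
      {j | 1 ≤ j ∧ j ≤ T.length ∧ ∃ R, Suf T j = P ++ R ∧ LexLt R Q}.ncard := by
  have hsub : {j | 1 ≤ j ∧ j ≤ T.length ∧ LexLt (Suf T j) P} ⊆
      {j | 1 ≤ j ∧ j ≤ T.length ∧ LexLt (Suf T j) (P ++ Q)} :=
    fun j ⟨h1, h2, h⟩ => ⟨h1, h2, List.Lex.append_right _ Q h⟩
  have hfin : {j | 1 ≤ j ∧ j ≤ T.length ∧ LexLt (Suf T j) P}.Finite :=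
    (Set.finite_Icc 1 T.length).subset fun j hj => ⟨hj.1, hj.2.1⟩
  rw [RangeBeg, RangeBeg, ← Set.ncard_sdiff hsub hfin]
  congr 1
  ext j
  simp only [Set.mem_sdiff, Set.mem_ofPred_eq, ← lexLt_append_and_not_lexLt_iff]
  tauto

section BinaryEncoding

theorem length_binSym (k x : ℕ) : (binSym k x).length = k := by simp [binSym]

theorem length_sEnc (k x : ℕ) : (sEnc k x).length = k := by simp [sEnc, length_binSym]

theorem four_not_mem_sEnc (k x : ℕ) : 4 ∉ sEnc k x := by
  simp only [sEnc, binSym, List.mem_map, List.mem_range, not_exists, not_and]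
  omega

theorem binSym_succ (k x : ℕ) : binSym (k + 1) x = binSym k (x / 2) ++ [x % 2] := by
  simp only [binSym, List.range_succ, List.map_append, List.map_cons, List.map_nil,
    Nat.add_sub_cancel, Nat.sub_self, pow_zero, Nat.div_one, List.append_cancel_right_eq]
  refine List.map_congr_left fun i hi => ?_
  rw [List.mem_range] at hi
  rw [Nat.div_div_eq_div_mul, ← pow_succ', show k - 1 - i + 1 = k - i by omega]

theorem binSym_strictMonoOn (k : ℕ) : StrictMonoOn (binSym k) (Set.Iio (2 ^ k)) := by
  induction k with
  | zero => intro a ha b hb; simp_all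
  | succ k ih =>
    intro a ha b hb hab
    simp only [Set.mem_Iio, pow_succ] at ha hb
    rw [binSym_succ, binSym_succ]
    rcases (Nat.div_le_div_right (c := 2) hab.le).lt_or_eq with hlt | heq
    · have h := ih (Set.mem_Iio.mpr (by omega)) (Set.mem_Iio.mpr (by omega)) hlt
      exact List.Lex.append_right _ _
        ((lexLt_append_iff_of_length_eq _ (by simp [length_binSym])).mpr h)
    · rw [heq, show a % 2 = 0 by omega, show b % 2 = 1 by omega]
      exact List.Lex.append_left _ (List.Lex.rel Nat.zero_lt_one) _

theorem sEnc_strictMonoOn (k : ℕ) : StrictMonoOn (sEnc k) (Set.Iio (2 ^ k)) :=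
  fun _ ha _ hb hab => List.map_lt (fun _ _ h => Nat.add_lt_add_right h 2)
    (binSym_strictMonoOn k ha hb hab)

end BinaryEncoding

theorem List.length_flatten_of_forall_length_eq {α : Type*} {l : List (List α)} {n : ℕ}
    (hl : ∀ s ∈ l, s.length = n) : l.flatten.length = l.length * n := by
  rw [List.length_flatten, List.map_congr_left hl]
  simp

theorem List.drop_flatten_of_forall_length_eq {α : Type*} {l : List (List α)} {n t o : ℕ}
    (hl : ∀ s ∈ l, s.length = n) (ht : t < l.length) (ho : o ≤ n) :
    l.flatten.drop (t * n + o) = l[t].drop o ++ (l.drop (t + 1)).flatten := by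
  induction l generalizing t with
  | nil => simp at ht
  | cons s l ih =>
    have hs : s.length = n := hl s List.mem_cons_self
    cases t with
    | zero => simp [List.drop_append_of_le_length (hs ▸ ho)]
    | succ t =>
      rw [List.flatten_cons, List.drop_append, List.drop_eq_nil_of_le (by rw [hs]; nlinarith),
        hs, show (t + 1) * n + o - n = t * n + o by rw [Nat.succ_mul]; omega,
        ih (fun s hs => hl s (List.mem_cons_of_mem _ hs)) (by simpa using ht)]
      simp

theorem List.eq_length_of_getElem?_append_cons_eq_self {α : Type*} {u v : List α} {a : α}
    {o : ℕ} (hu : a ∉ u) (hv : a ∉ v) (h : (u ++ a :: v)[o]? = some a) : o = u.length := by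
  rcases lt_trichotomy o u.length with ho | ho | ho
  · rw [List.getElem?_append_left ho] at h
    exact absurd (List.mem_of_getElem? h) hu
  · exact ho
  · rw [List.getElem?_append_right ho.le, show o - u.length = o - u.length - 1 + 1 by omega,
      List.getElem?_cons_succ] at h
    exact absurd (List.mem_of_getElem? h) hv

def seqBlock (k : ℕ) (W : ℕ → List ℕ) (t : ℕ) : List ℕ :=
  (W (t + 1)).reverse ++ [4] ++ sEnc k t

def seqString (k m : ℕ) (W : ℕ → List ℕ) : List ℕ :=
  ((List.range m).map (seqBlock k W)).flatten

theorem seqToString_eq_seqString (m : ℕ) (W : ℕ → List ℕ) :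
    SeqToString m W = seqString (1 + Nat.log 2 m) m W :=
  rfl

section SeqString

variable {k m ℓ : ℕ} {W : ℕ → List ℕ}

theorem length_seqBlock {t : ℕ} (h : (W (t + 1)).length = ℓ) :
    (seqBlock k W t).length = ℓ + 1 + k := by
  rw [seqBlock, List.length_append, List.length_append, List.length_reverse, h,
    List.length_singleton, length_sEnc]

theorem eq_of_getElem?_seqBlock_eq_four {t o : ℕ} (hlen : (W (t + 1)).length = ℓ)
    (hbin : ∀ a ∈ W (t + 1), a < 2) (h : (seqBlock k W t)[o]? = some 4) : o = ℓ := by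
  rw [← hlen, ← List.length_reverse]
  refine List.eq_length_of_getElem?_append_cons_eq_self (fun h4 => ?_) (four_not_mem_sEnc k t)
    (by simpa [seqBlock] using h)
  have := hbin 4 (List.mem_reverse.mp h4)
  omega

theorem length_eq_of_mem_seqBlocks (hW : ∀ r, 1 ≤ r → r ≤ m → (W r).length = ℓ) :
    ∀ s ∈ (List.range m).map (seqBlock k W), s.length = ℓ + 1 + k := by
  simp only [List.mem_map, List.mem_range, forall_exists_index, and_imp]
  rintro _ t ht rfl
  exact length_seqBlock (hW (t + 1) (by omega) (by omega))

theorem length_seqString (hW : ∀ r, 1 ≤ r → r ≤ m → (W r).length = ℓ) :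
    (seqString k m W).length = m * (ℓ + 1 + k) := by
  rw [seqString, List.length_flatten_of_forall_length_eq (length_eq_of_mem_seqBlocks hW),
    List.length_map, List.length_range]

theorem exists_drop_seqString_eq (hW : ∀ r, 1 ≤ r → r ≤ m → (W r).length = ℓ) {t o : ℕ}
    (ht : t < m) (ho : o ≤ ℓ + 1 + k) :
    ∃ R, (seqString k m W).drop (t * (ℓ + 1 + k) + o) = (seqBlock k W t).drop o ++ R := by
  rw [seqString, List.drop_flatten_of_forall_length_eq (length_eq_of_mem_seqBlocks hW)
    (by simpa using ht) ho]
  simp only [List.getElem_map, List.getElem_range]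
  exact ⟨_, rfl⟩

theorem getElem?_seqString (hW : ∀ r, 1 ≤ r → r ≤ m → (W r).length = ℓ) {t o : ℕ}
    (ht : t < m) (ho : o < ℓ + 1 + k) :
    (seqString k m W)[t * (ℓ + 1 + k) + o]? = (seqBlock k W t)[o]? := by
  obtain ⟨R, hR⟩ := exists_drop_seqString_eq hW ht ho.le
  have hlen := length_seqBlock (k := k) (hW (t + 1) (by omega) (by omega))
  rw [← add_zero (t * _ + o), ← List.getElem?_drop, hR,
    List.getElem?_append_left (by rw [List.length_drop, hlen]; omega), List.getElem?_drop, add_zero]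

theorem mod_eq_of_getElem?_seqString_eq_four (hW : ∀ r, 1 ≤ r → r ≤ m → (W r).length = ℓ)
    (hWbin : ∀ r, 1 ≤ r → r ≤ m → ∀ a ∈ W r, a < 2) {e : ℕ}
    (h : (seqString k m W)[e]? = some 4) : e % (ℓ + 1 + k) = ℓ := by
  have hL : 0 < ℓ + 1 + k := by omega
  have he : e < m * (ℓ + 1 + k) := length_seqString hW ▸ (List.getElem?_eq_some_iff.mp h).1
  have ht : e / (ℓ + 1 + k) < m := (Nat.div_lt_iff_lt_mul hL).mpr he
  rw [← Nat.div_add_mod' e (ℓ + 1 + k), getElem?_seqString hW ht (Nat.mod_lt e hL)] at h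
  exact eq_of_getElem?_seqBlock_eq_four (hW _ (Nat.le_add_left 1 _) ht)
    (hWbin _ (Nat.le_add_left 1 _) ht) h

theorem exists_suf_seqString_eq (hW : ∀ r, 1 ≤ r → r ≤ m → (W r).length = ℓ) {t n : ℕ}
    (ht : t < m) (hn : n ≤ ℓ) :
    ∃ R, Suf (seqString k m W) (t * (ℓ + 1 + k) + (ℓ - n) + 1) =
      ((W (t + 1)).take n).reverse ++ [4] ++ sEnc k t ++ R := by
  obtain ⟨R, hR⟩ := exists_drop_seqString_eq hW ht (o := ℓ - n) (by omega)
  have hlen := hW (t + 1) (by omega) (by omega)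
  refine ⟨R, ?_⟩
  rw [Suf, Nat.add_sub_cancel, hR, seqBlock, List.append_assoc,
    List.drop_append_of_le_length (by simp [hlen]), List.drop_reverse, hlen,
    show ℓ - (ℓ - n) = n by omega]
  simp

theorem exists_eq_of_prefix_suf_seqString (hW : ∀ r, 1 ≤ r → r ≤ m → (W r).length = ℓ)
    (hWbin : ∀ r, 1 ≤ r → r ≤ m → ∀ a ∈ W r, a < 2) {X : List ℕ} (hX : X.length ≤ ℓ) {j : ℕ}
    (hj : 1 ≤ j) (h : X.reverse ++ [4] <+: Suf (seqString k m W) j) :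
    ∃ t < m, j = t * (ℓ + 1 + k) + (ℓ - X.length) + 1 ∧ X <+: W (t + 1) := by
  have h4 : (seqString k m W)[j - 1 + X.length]? = some 4 := by
    obtain ⟨rest, hrest⟩ := h
    rw [← List.getElem?_drop, ← Suf, ← hrest]
    simp
  have hmod := mod_eq_of_getElem?_seqString_eq_four hW hWbin h4
  have he : j - 1 + X.length < m * (ℓ + 1 + k) :=
    length_seqString hW ▸ (List.getElem?_eq_some_iff.mp h4).1
  obtain ⟨t, ht, hjt⟩ : ∃ t < m, j = t * (ℓ + 1 + k) + (ℓ - X.length) + 1 := by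
    refine ⟨(j - 1 + X.length) / (ℓ + 1 + k), (Nat.div_lt_iff_lt_mul (by omega)).mpr he, ?_⟩
    have := Nat.div_add_mod' (j - 1 + X.length) (ℓ + 1 + k)
    omega
  refine ⟨t, ht, hjt, List.prefix_iff_eq_take.mpr ?_⟩
  obtain ⟨R, hR⟩ := exists_suf_seqString_eq hW ht hX
  rw [hjt, hR, List.append_assoc _ _ R] at h
  have hlen : (((W (t + 1)).take X.length).reverse ++ [4]).length = (X.reverse ++ [4]).length := by
    simp [hW (t + 1) (by omega) (by omega), hX]
  simpa using (List.prefix_of_prefix_length_le h (List.prefix_append _ _) hlen.ge).eq_of_length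
    hlen.symm

theorem exists_suf_seqString_eq_of_prefix (hW : ∀ r, 1 ≤ r → r ≤ m → (W r).length = ℓ)
    {t : ℕ} (ht : t < m) {X : List ℕ} (hX : X.length ≤ ℓ) (hXW : X <+: W (t + 1)) :
    ∃ R, Suf (seqString k m W) (t * (ℓ + 1 + k) + (ℓ - X.length) + 1) =
      X.reverse ++ [4] ++ sEnc k t ++ R := by
  obtain ⟨R, hR⟩ := exists_suf_seqString_eq (k := k) hW ht hX
  rw [← List.prefix_iff_eq_take.mp hXW] at hR
  exact ⟨R, hR⟩

theorem setOf_suf_seqString_eq_image (hmk : m < 2 ^ k)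
    (hW : ∀ r, 1 ≤ r → r ≤ m → (W r).length = ℓ)
    (hWbin : ∀ r, 1 ≤ r → r ≤ m → ∀ a ∈ W r, a < 2) {X : List ℕ} (hX : X.length ≤ ℓ) {i : ℕ}
    (hi : i ≤ m) :
    {j | 1 ≤ j ∧ j ≤ (seqString k m W).length ∧
        ∃ R, Suf (seqString k m W) j = X.reverse ++ [4] ++ R ∧ LexLt R (sEnc k i)} =
      (fun r => (r - 1) * (ℓ + 1 + k) + (ℓ - X.length) + 1) '' {r | 1 ≤ r ∧ r ≤ i ∧ X <+: W r} := by
  have hsEnc : ∀ t < m, ∀ R, LexLt (sEnc k t ++ R) (sEnc k i) ↔ t < i := fun t ht R =>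
    (lexLt_append_iff_of_length_eq R (by simp [length_sEnc])).trans
      ((sEnc_strictMonoOn k).lt_iff_lt (Set.mem_Iio.mpr (by omega)) (Set.mem_Iio.mpr (by omega)))
  ext j
  constructor
  · rintro ⟨hj, -, R, hR, hlt⟩
    obtain ⟨t, ht, rfl, hXW⟩ := exists_eq_of_prefix_suf_seqString hW hWbin hX hj ⟨R, hR.symm⟩
    obtain ⟨R', hR'⟩ := exists_suf_seqString_eq_of_prefix hW ht hX hXW
    rw [hR', List.append_assoc _ (sEnc k t), List.append_cancel_left_eq] at hR
    rw [← hR, hsEnc t ht] at hlt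
    exact ⟨t + 1, ⟨by omega, by omega, hXW⟩, by simp⟩
  · rintro ⟨r, ⟨hr, hri, hXW⟩, rfl⟩
    obtain ⟨t, rfl⟩ : ∃ t, r = t + 1 := ⟨r - 1, by omega⟩
    obtain ⟨R, hR⟩ := exists_suf_seqString_eq_of_prefix (k := k) hW (by omega : t < m) hX hXW
    have hblock := Nat.mul_le_mul_right (ℓ + 1 + k) (by omega : t + 1 ≤ m)
    rw [Nat.succ_mul] at hblock
    simp only [Nat.add_sub_cancel]
    refine ⟨by omega, by rw [length_seqString hW]; omega, sEnc k t ++ R, by simp [hR],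
      (hsEnc t (by omega) R).mpr (by omega)⟩

end SeqString

theorem stmt8_general (m ℓ : ℕ) (W : ℕ → List ℕ)
    (hWlen : ∀ i, 1 ≤ i → i ≤ m → (W i).length = ℓ)
    (hWbin : ∀ i, 1 ≤ i → i ≤ m → ∀ a ∈ W i, a < 2)
    (X : List ℕ) (hXlen : X.length ≤ ℓ)
    (i : ℕ) (hi : i ≤ m) :
    PrefixRank W i X =
      RangeBeg (X.reverse ++ [4] ++ sEnc (1 + Nat.log 2 m) i) (SeqToString m W) -
        RangeBeg (X.reverse ++ [4]) (SeqToString m W) := by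
  have hmk : m < 2 ^ (1 + Nat.log 2 m) := by
    rw [add_comm]
    exact Nat.lt_pow_succ_log_self (by norm_num) m
  rw [rangeBeg_append_sub_rangeBeg, seqToString_eq_seqString,
    setOf_suf_seqString_eq_image hmk hWlen hWbin hXlen hi, Set.InjOn.ncard_image]
  · rfl
  · rintro r₁ ⟨h₁, -⟩ r₂ ⟨h₂, -⟩ h
    have := Nat.eq_of_mul_eq_mul_right (by omega) (Nat.add_right_cancel (Nat.add_right_cancel h))
    omega

theorem stmt8 (m ℓ : ℕ) (hm : 1 ≤ m) (hℓ : 1 ≤ ℓ) (W : ℕ → List ℕ)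
    (hWlen : ∀ i, 1 ≤ i → i ≤ m → (W i).length = ℓ)
    (hWbin : ∀ i, 1 ≤ i → i ≤ m → ∀ a ∈ W i, a < 2)
    (X : List ℕ) (hXlen : X.length ≤ ℓ) (hXbin : ∀ a ∈ X, a < 2)
    (i : ℕ) (hi : i ≤ m) :
    PrefixRank W i X =
      RangeBeg (X.reverse ++ [4] ++ sEnc (1 + Nat.log 2 m) i) (SeqToString m W) -
        RangeBeg (X.reverse ++ [4]) (SeqToString m W) :=
  stmt8_general m ℓ W hWlen hWbin X hXlen i hi
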